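/- Let h(t) be the total size Σ_{λ ∈ DS(t)} |λ|, g(t) the total number of main diagonal hooks, and f(t) the number of partitions in DS(t). Then for t ≥ 3: h(t) = 2t·g(t−1) + (2t−2)·g(t−3) − h(t−1) − h(t−3) + f(t−3), with initial values h(0) = h(1) = 0 and h(2) = 1. -/

import Mathlib

/-- An integer partition, given by its (weakly decreasing, eventually zero)
sequence of parts, indexed from `0`. -/
structure IntegerPartition where
  parts : ℕ → ℕ
  antitone : ∀ i j, i ≤ j → parts j ≤ parts i
  finite : ∃ N, ∀ i, N ≤ i → parts i = 0

namespace IntegerPartition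

/-- The size of a partition: the sum of its parts. -/
noncomputable def size (lam : IntegerPartition) : ℕ := ∑ᶠ i, lam.parts i

/-- The parts of the conjugate partition: `conjParts lam j` is the number of
rows `i` with `lam.parts i > j` (rows and columns are `0`-indexed). -/
noncomputable def conjParts (lam : IntegerPartition) (j : ℕ) : ℕ :=
  Nat.card {i : ℕ | j < lam.parts i}

/-- A partition is self-conjugate if it equals its conjugate. -/
def IsSelfConjugate (lam : IntegerPartition) : Prop :=
  ∀ j, lam.conjParts j = lam.parts j

/-- `(i, j)` (both `0`-indexed) is a cell of the Young diagram of `lam`. -/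
def IsCell (lam : IntegerPartition) (i j : ℕ) : Prop := j < lam.parts i

/-- The hook length of the cell `(i, j)` (both `0`-indexed): the number of
cells directly to the right, plus the number directly below, plus one. -/
noncomputable def hook (lam : IntegerPartition) (i j : ℕ) : ℕ :=
  (lam.parts i - j) + (lam.conjParts j - i) - 1

/-- A partition is a `t`-core if no hook length is divisible by `t`. -/
def IsCore (lam : IntegerPartition) (t : ℕ) : Prop :=
  ∀ i j, lam.IsCell i j → ¬ (t ∣ lam.hook i j)

/-- The size of the Durfee square: the largest `k` such that the partition has
at least `k` parts of size at least `k`. -/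
noncomputable def durfee (lam : IntegerPartition) : ℕ :=
  Nat.card {i : ℕ | i < lam.parts i}

/-- A partition has distinct parts if its (nonzero) parts are pairwise different. -/
def DistinctParts (lam : IntegerPartition) : Prop :=
  ∀ i j, lam.parts i ≠ 0 → lam.parts j ≠ 0 → i ≠ j → lam.parts i ≠ lam.parts j

/-- The set of main diagonal hook lengths of `lam`. -/
noncomputable def MD (lam : IntegerPartition) : Set ℕ :=
  {h | ∃ i < lam.durfee, lam.hook i i = h}

/-- `lam ∈ DS(t)`: `lam` is a self-conjugate `(t, t+1)`-core partition whose
first `durfee lam` parts are pairwise distinct. -/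
def InDS (lam : IntegerPartition) (t : ℕ) : Prop :=
  lam.IsSelfConjugate ∧ lam.IsCore t ∧ lam.IsCore (t + 1) ∧
    ∀ i j, i < lam.durfee → j < lam.durfee → i ≠ j → lam.parts i ≠ lam.parts j

end IntegerPartition

/-- `fDS t` is the number of partitions in `DS(t)`. -/
noncomputable def fDS (t : ℕ) : ℕ := Nat.card {lam : IntegerPartition // lam.InDS t}

/-- `gDS t` is the total number of main diagonal hooks of the partitions in `DS(t)`. -/
noncomputable def gDS (t : ℕ) : ℕ := ∑ᶠ (lam : IntegerPartition) (_ : lam.InDS t), lam.durfee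

/-- `hDS t` is the total size of the partitions in `DS(t)`. -/
noncomputable def hDS (t : ℕ) : ℕ := ∑ᶠ (lam : IntegerPartition) (_ : lam.InDS t), lam.size

/-!
A self-conjugate partition is determined by the arm lengths `a₀ > a₁ > ⋯` of its diagonal hooks
(its Frobenius coordinates `(a | a)`): its size is `∑ (2aᵢ + 1)`, the hook of the cell `(i, j)` of
the Durfee square is `aᵢ + aⱼ + 1`, and every hook outside the Durfee square is at most `a₀`.
Reading off which hooks are divisible by `t` or `t + 1` shows that `λ ∈ DS(t)` iff its set `S` of
arm lengths lies below `t`, contains no two consecutive integers, and has no sum `a + b + 1`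
(with `a = b` allowed) equal to `t` or `t + 1`.

For `t = u + 3`, the admissible sets `S` with `0 ∉ S` correspond to those for `u + 2` under
`a ↦ u + 2 - a`, and those with `0 ∈ S` to those for `u` under `S ↦ {u + 1 - a | a ∈ S \ {0}}`.
The reflection `a ↦ m - a` turns the size `∑ (2a + 1)` of a set `S ⊆ [0, m]` into
`2(m + 1)|S|` minus that size, and the added `0` contributes `1`; summing over both
correspondences gives the recurrence.
-/

open Finset

theorem IsLowerSet.lt_natCard_iff {s : Set ℕ} (hs : IsLowerSet s) (hfin : s.Finite) {i : ℕ} :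
    i < Nat.card s ↔ i ∈ s := by
  rcases hs.eq_univ_or_Iio with rfl | ⟨a, rfl⟩
  · exact absurd hfin Set.infinite_univ
  · simp

theorem IsLowerSet.lt_card_iff {s : Finset ℕ} (hs : IsLowerSet (s : Set ℕ)) {i : ℕ} :
    i < #s ↔ i ∈ s := by
  simpa using hs.lt_natCard_iff s.finite_toSet

theorem Nat.eq_of_dvd_of_pos_of_lt_two_mul {T v : ℕ} (h : T ∣ v) (hv : 0 < v) (hvT : v < 2 * T) :
    v = T := by
  obtain ⟨c, rfl⟩ := h
  rcases c with _ | _ | c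
  · omega
  · ring
  · nlinarith

namespace IntegerPartition

theorem ext {p q : IntegerPartition} (h : p.parts = q.parts) : p = q := by
  cases p; cases q; cases h; rfl

variable (lam : IntegerPartition)

theorem finite_setOf_lt_parts (f : ℕ → ℕ) : {i | f i < lam.parts i}.Finite := by
  obtain ⟨N, hN⟩ := lam.finite
  refine (Set.finite_Iio N).subset fun i hi => ?_
  by_contra h
  have hlt : f i < lam.parts i := hi
  rw [hN i (not_lt.1 h)] at hlt
  omega

theorem lt_conjParts_iff {i j : ℕ} : i < lam.conjParts j ↔ j < lam.parts i :=
  IsLowerSet.lt_natCard_iff (fun _ _ hba ha => lt_of_lt_of_le ha (lam.antitone _ _ hba))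
    (lam.finite_setOf_lt_parts fun _ => j)

theorem lt_durfee_iff {i : ℕ} : i < lam.durfee ↔ i < lam.parts i :=
  IsLowerSet.lt_natCard_iff
    (fun _ _ hba ha => lt_of_le_of_lt hba (lt_of_lt_of_le ha (lam.antitone _ _ hba)))
    (lam.finite_setOf_lt_parts id)

variable {lam}

theorem one_le_hook {i j : ℕ} (h : lam.IsCell i j) : 1 ≤ lam.hook i j := by
  have := lam.lt_conjParts_iff.2 h
  rw [IsCell] at h
  rw [hook]
  omega

theorem parts_le_durfee (hsc : lam.IsSelfConjugate) {k : ℕ} (hk : lam.durfee ≤ k) :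
    lam.parts k ≤ lam.durfee := by
  by_contra! h
  have := lam.lt_conjParts_iff.2 h
  rw [hsc] at this
  have := lam.lt_durfee_iff.2 (hk.trans_lt this)
  omega

end IntegerPartition

namespace List

variable {l : List ℕ}

theorem SortedGT.getD_add_le (hl : l.SortedGT) {i j : ℕ} (hij : i ≤ j) (hj : j < l.length) :
    l.getD j 0 + (j - i) ≤ l.getD i 0 := by
  obtain ⟨d, rfl⟩ := Nat.exists_eq_add_of_le hij
  induction d with
  | zero => simp
  | succ d ih =>
    have hstep : l.getD (i + d + 1) 0 < l.getD (i + d) 0 := by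
      rw [getD_eq_getElem _ _ (show i + d + 1 < l.length by omega),
        getD_eq_getElem _ _ (show i + d < l.length by omega)]
      exact hl.getElem_lt_getElem_iff.2 (by omega)
    have := ih (by omega) (by omega)
    rw [← add_assoc]
    omega

theorem SortedGT.length_le_getD_add (hl : l.SortedGT) {i : ℕ} (hi : i < l.length) :
    l.length ≤ l.getD i 0 + i + 1 := by
  have := hl.getD_add_le (Nat.le_sub_one_of_lt hi) (by omega)
  omega

theorem SortedGT.getD_le_getD_zero (hl : l.SortedGT) {i : ℕ} (hi : i < l.length) :
    l.getD i 0 ≤ l.getD 0 0 := by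
  have := hl.getD_add_le (Nat.zero_le i) hi
  omega

theorem getD_mem {k : ℕ} (hk : k < l.length) : l.getD k 0 ∈ l := by
  rw [getD_eq_getElem _ _ hk]
  exact getElem_mem hk

theorem exists_lt_length_getD_eq {a : ℕ} (ha : a ∈ l) : ∃ k < l.length, l.getD k 0 = a := by
  obtain ⟨k, hk, rfl⟩ := getElem_of_mem ha
  exact ⟨k, hk, getD_eq_getElem _ _ hk⟩

theorem lt_length_of_getD_pos {k : ℕ} (h : 0 < l.getD k 0) : k < l.length := by
  by_contra! hk
  rw [getD_eq_default _ _ hk] at h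
  exact h.false

theorem sum_range_getD (l : List ℕ) : ∑ k ∈ Finset.range l.length, l.getD k 0 = l.sum := by
  induction l with
  | nil => simp
  | cons a l ih =>
    rw [length_cons, Finset.sum_range_succ', sum_cons, getD_cons_zero, ← ih, add_comm]
    simp only [getD_cons_succ]

theorem SortedGT.exists_split (hl : l.SortedGT) {w : ℕ} (hwl : w ∉ l) :
    ∃ m ≤ l.length, (∀ k < m, w < l.getD k 0) ∧ ∀ k, m ≤ k → k < l.length → l.getD k 0 < w := by
  have hlt_m k : k < #{k ∈ Finset.range l.length | w < l.getD k 0} ↔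
      k < l.length ∧ w < l.getD k 0 := by
    rw [IsLowerSet.lt_card_iff, Finset.mem_filter, Finset.mem_range]
    intro a b hba ha
    simp only [Finset.coe_filter, Finset.mem_range, Set.mem_ofPred_eq] at ha ⊢
    have := hl.getD_add_le hba ha.1
    omega
  refine ⟨_, (Finset.card_filter_le _ _).trans (Finset.card_range _).le,
    fun k hk => ((hlt_m k).1 hk).2, fun k hmk hk => ?_⟩
  have := (hlt_m k).not.1 (by omega)
  have : l.getD k 0 ≠ w := fun h => hwl (h ▸ l.getD_mem hk)
  omega

end List

namespace IntegerPartition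

section OfArms

variable {l : List ℕ}

def armsReaching (l : List ℕ) (i : ℕ) : ℕ := #{k ∈ range l.length | i ≤ l.getD k 0 + k}

theorem armsReaching_le_length (l : List ℕ) (i : ℕ) : armsReaching l i ≤ l.length :=
  (card_filter_le _ _).trans (card_range _).le

theorem lt_armsReaching_iff (hl : l.SortedGT) {i k : ℕ} :
    k < armsReaching l i ↔ k < l.length ∧ i ≤ l.getD k 0 + k := by
  rw [armsReaching, IsLowerSet.lt_card_iff, mem_filter, mem_range]
  intro a b hba ha
  simp only [coe_filter, mem_range, Set.mem_ofPred_eq] at ha ⊢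
  have := hl.getD_add_le hba ha.1
  omega

def frobeniusParts (l : List ℕ) (i : ℕ) : ℕ :=
  if i < l.length then l.getD i 0 + i + 1 else armsReaching l i

theorem frobeniusParts_of_lt {i : ℕ} (hi : i < l.length) :
    frobeniusParts l i = l.getD i 0 + i + 1 := if_pos hi

theorem frobeniusParts_of_le {i : ℕ} (hi : l.length ≤ i) :
    frobeniusParts l i = armsReaching l i := if_neg (Nat.not_lt.2 hi)

theorem frobeniusParts_antitone (hl : l.SortedGT) : Antitone (frobeniusParts l) := by
  intro i j hij
  rcases lt_or_ge j l.length with hj | hj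
  · rw [frobeniusParts_of_lt hj, frobeniusParts_of_lt (hij.trans_lt hj)]
    have := hl.getD_add_le hij hj
    omega
  rw [frobeniusParts_of_le hj]
  rcases lt_or_ge i l.length with hi | hi
  · rw [frobeniusParts_of_lt hi]
    have := hl.length_le_getD_add hi
    have := armsReaching_le_length l j
    omega
  · rw [frobeniusParts_of_le hi]
    exact card_le_card (monotone_filter_right _ fun k _ h => hij.trans h)

theorem frobeniusParts_eq_zero (hl : l.SortedGT) {i : ℕ} (hi : l.getD 0 0 + l.length ≤ i) :
    frobeniusParts l i = 0 := by
  rw [frobeniusParts_of_le (by omega), armsReaching, card_eq_zero, filter_eq_empty_iff]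
  intro k hk
  have := hl.getD_le_getD_zero (mem_range.1 hk)
  have := mem_range.1 hk
  omega

theorem sum_Ico_armsReaching (hl : l.SortedGT) :
    ∑ i ∈ Ico l.length (l.getD 0 0 + l.length), armsReaching l i =
      ∑ k ∈ range l.length, (l.getD k 0 + k + 1 - l.length) := by
  simp only [armsReaching, card_filter]
  rw [sum_comm]
  refine sum_congr rfl fun k hk => ?_
  have := hl.getD_le_getD_zero (mem_range.1 hk)
  have := mem_range.1 hk
  rw [← card_filter, ← Nat.card_Ico]
  congr 1
  ext i
  simp only [mem_filter, mem_Ico]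
  omega

/-- The self-conjugate partition with Frobenius coordinates `(l | l)`: row `i < l.length` is the
diagonal cell followed by an arm of length `l.getD i 0`, and for `i ≥ l.length` row `i` is as long
as column `i`, i.e. counts the arms reaching column `i`. -/
def ofArms (l : List ℕ) (hl : l.SortedGT) : IntegerPartition where
  parts := frobeniusParts l
  antitone _ _ := fun hij => frobeniusParts_antitone hl hij
  finite := ⟨l.getD 0 0 + l.length, fun _ => frobeniusParts_eq_zero hl⟩

variable (hl : l.SortedGT)
include hl

theorem parts_ofArms_of_lt {i : ℕ} (hi : i < l.length) :
    (ofArms l hl).parts i = l.getD i 0 + i + 1 := frobeniusParts_of_lt hi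

theorem parts_ofArms_of_le {i : ℕ} (hi : l.length ≤ i) :
    (ofArms l hl).parts i = armsReaching l i := frobeniusParts_of_le hi

theorem lt_parts_ofArms_comm {i j : ℕ} (h : j < (ofArms l hl).parts i) :
    i < (ofArms l hl).parts j := by
  rcases lt_or_ge i l.length with hi | hi
  · rw [parts_ofArms_of_lt hl hi] at h
    rcases lt_or_ge j l.length with hj | hj
    · rw [parts_ofArms_of_lt hl hj]
      rcases le_or_gt j i with hji | hij
      · have := hl.getD_add_le hji hi
        omega
      · omega
    · rw [parts_ofArms_of_le hl hj, lt_armsReaching_iff hl]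
      omega
  · rw [parts_ofArms_of_le hl hi, lt_armsReaching_iff hl] at h
    rw [parts_ofArms_of_lt hl h.1]
    omega

theorem conjParts_ofArms : (ofArms l hl).conjParts = (ofArms l hl).parts := by
  ext j
  refine eq_of_forall_lt_iff fun i => ?_
  rw [lt_conjParts_iff]
  exact ⟨lt_parts_ofArms_comm hl, lt_parts_ofArms_comm hl⟩

theorem isSelfConjugate_ofArms : (ofArms l hl).IsSelfConjugate :=
  congrFun (conjParts_ofArms hl)

theorem durfee_ofArms : (ofArms l hl).durfee = l.length := by
  refine eq_of_forall_lt_iff fun i => ?_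
  rw [lt_durfee_iff]
  rcases lt_or_ge i l.length with hi | hi
  · rw [parts_ofArms_of_lt hl hi]
    omega
  · rw [parts_ofArms_of_le hl hi]
    have := armsReaching_le_length l i
    omega

theorem size_ofArms : (ofArms l hl).size = 2 * l.sum + l.length := by
  have hsupp : Function.support (ofArms l hl).parts ⊆ range (l.getD 0 0 + l.length) :=
    fun i hi => by
      by_contra h
      exact hi (frobeniusParts_eq_zero hl (not_lt.1 (by simpa using h)))
  rw [size, finsum_eq_sum_of_support_subset _ hsupp,
    ← sum_range_add_sum_Ico _ (Nat.le_add_left l.length _)]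
  have hsquare : ∑ i ∈ range l.length, (ofArms l hl).parts i =
      ∑ k ∈ range l.length, (l.getD k 0 + k + 1) :=
    sum_congr rfl fun i hi => parts_ofArms_of_lt hl (mem_range.1 hi)
  have hbelow : ∑ i ∈ Ico l.length (l.getD 0 0 + l.length), (ofArms l hl).parts i =
      ∑ k ∈ range l.length, (l.getD k 0 + k + 1 - l.length) := by
    rw [sum_congr rfl fun i hi => parts_ofArms_of_le hl (mem_Ico.1 hi).1, sum_Ico_armsReaching hl]
  have hreflect : ∑ k ∈ range l.length, (l.getD k 0 + k + 1 - l.length) +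
      ∑ k ∈ range l.length, (l.length - 1 - k) = l.sum := by
    rw [← sum_add_distrib, ← l.sum_range_getD]
    refine sum_congr rfl fun k hk => ?_
    have := hl.length_le_getD_add (mem_range.1 hk)
    have := mem_range.1 hk
    omega
  have hid : ∑ k ∈ range l.length, (l.length - 1 - k) = ∑ k ∈ range l.length, k :=
    sum_range_reflect id l.length
  have hdiag : ∑ k ∈ range l.length, (l.getD k 0 + k + 1) =
      l.sum + ∑ k ∈ range l.length, k + l.length := by
    rw [sum_add_distrib, sum_add_distrib, l.sum_range_getD, sum_const, card_range, smul_eq_mul,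
      mul_one]
  omega

theorem hook_ofArms_of_lt {i j : ℕ} (hi : i < l.length) (hj : j < l.length) :
    (ofArms l hl).hook i j = l.getD i 0 + l.getD j 0 + 1 := by
  rw [hook, conjParts_ofArms hl, parts_ofArms_of_lt hl hi, parts_ofArms_of_lt hl hj]
  have := hl.length_le_getD_add hi
  have := hl.length_le_getD_add hj
  omega

theorem hook_ofArms_le_getD_zero {i j : ℕ} (hcell : (ofArms l hl).IsCell i j)
    (hout : l.length ≤ i ∨ l.length ≤ j) : (ofArms l hl).hook i j ≤ l.getD 0 0 := by
  rw [IsCell] at hcell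
  rw [hook, conjParts_ofArms hl]
  rcases lt_or_ge i l.length with hi | hi
  · have hj := hout.resolve_left (by omega)
    rw [parts_ofArms_of_lt hl hi] at hcell ⊢
    rw [parts_ofArms_of_le hl hj]
    have := armsReaching_le_length l j
    have := (lt_armsReaching_iff hl (i := j)).2 ⟨hi, by omega⟩
    have := hl.getD_le_getD_zero hi
    omega
  · rw [parts_ofArms_of_le hl hi] at hcell ⊢
    obtain ⟨hj, hij⟩ := (lt_armsReaching_iff hl).1 hcell
    rw [parts_ofArms_of_lt hl hj]
    have := armsReaching_le_length l i
    have := hl.getD_le_getD_zero hj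
    omega

theorem armsReaching_add_eq {w m : ℕ} (hm : m ≤ l.length) (hgt : ∀ k < m, w < l.getD k 0)
    (hlt : ∀ k, m ≤ k → k < l.length → l.getD k 0 < w) : armsReaching l (w + m) = m := by
  refine eq_of_forall_lt_iff fun k => ?_
  rw [lt_armsReaching_iff hl]
  constructor
  · rintro ⟨hk, hreach⟩
    by_contra! hmk
    have := hl.getD_add_le hmk hk
    have := hlt m le_rfl (by omega)
    omega
  · intro hk
    have := hl.getD_add_le (Nat.le_sub_one_of_lt hk) (by omega)
    have := hgt (m - 1) (by omega)
    omega

theorem exists_hook_ofArms_eq {w : ℕ} (hw : w < l.getD 0 0) (hwl : w ∉ l) :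
    ∃ j, (ofArms l hl).IsCell 0 j ∧ (ofArms l hl).hook 0 j = l.getD 0 0 - w := by
  have hl0 : 0 < l.length := l.lt_length_of_getD_pos (by omega)
  obtain ⟨m, hm, hgt, hlt⟩ := hl.exists_split hwl
  have hm0 : 0 < m := by
    by_contra! h
    have := hlt 0 (by omega) hl0
    omega
  have hwm : w + m ≤ l.getD 0 0 := by
    have := hl.getD_add_le (Nat.zero_le (m - 1)) (by omega)
    have := hgt (m - 1) (by omega)
    omega
  have hnwm : l.length ≤ w + m := by
    rcases hm.lt_or_eq with hmn | hmn
    · have := hl.getD_add_le (Nat.le_sub_one_of_lt hmn) (by omega)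
      have := hlt m le_rfl hmn
      omega
    · omega
  refine ⟨w + m, ?_, ?_⟩
  · rw [IsCell, parts_ofArms_of_lt hl hl0]
    omega
  · rw [hook, conjParts_ofArms hl, parts_ofArms_of_lt hl hl0, parts_ofArms_of_le hl hnwm,
      armsReaching_add_eq hl hm hgt hlt]
    omega

end OfArms

section Arms

variable {l : List ℕ}

noncomputable def arms (lam : IntegerPartition) : List ℕ :=
  (List.range lam.durfee).map fun i => lam.parts i - i - 1

theorem length_arms (lam : IntegerPartition) : (arms lam).length = lam.durfee := by
  simp [arms]

theorem getD_arms (lam : IntegerPartition) {i : ℕ} (hi : i < lam.durfee) :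
    (arms lam).getD i 0 = lam.parts i - i - 1 := by
  simp [arms, hi]

theorem sortedGT_arms (lam : IntegerPartition) : (arms lam).SortedGT := by
  rw [List.sortedGT_iff_pairwise, arms, List.pairwise_map]
  refine List.pairwise_lt_range.imp_of_mem fun {i j} hi hj hij => ?_
  have := lam.lt_durfee_iff.1 (List.mem_range.1 hi)
  have := lam.lt_durfee_iff.1 (List.mem_range.1 hj)
  have := lam.antitone i j hij.le
  omega

theorem arms_ofArms (hl : l.SortedGT) : arms (ofArms l hl) = l := by
  refine List.ext_getElem (by rw [length_arms, durfee_ofArms]) fun k hk hk' => ?_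
  rw [← List.getD_eq_getElem _ 0, ← List.getD_eq_getElem _ 0,
    getD_arms _ (by simpa [arms] using hk), parts_ofArms_of_lt hl hk']
  omega

theorem ofArms_arms {lam : IntegerPartition} (hsc : lam.IsSelfConjugate) :
    ofArms (arms lam) (sortedGT_arms lam) = lam := by
  refine ext (funext fun i => ?_)
  rcases lt_or_ge i lam.durfee with hi | hi
  · rw [parts_ofArms_of_lt _ (by rwa [length_arms]), getD_arms _ hi]
    have := lam.lt_durfee_iff.1 hi
    omega
  rw [parts_ofArms_of_le _ (by rwa [length_arms]), ← hsc i]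
  refine eq_of_forall_lt_iff fun k => ?_
  rw [lt_armsReaching_iff (sortedGT_arms lam), lt_conjParts_iff, length_arms]
  constructor
  · rintro ⟨hk, hreach⟩
    rw [getD_arms _ hk] at hreach
    have := lam.lt_durfee_iff.1 hk
    omega
  · intro hik
    have hk : k < lam.durfee := by
      by_contra! hk
      have := parts_le_durfee hsc hk
      omega
    rw [getD_arms _ hk]
    exact ⟨hk, by omega⟩

end Arms

section InDS

variable {l : List ℕ} (hl : l.SortedGT)
include hl

theorem distinct_parts_ofArms_iff :
    (∀ i j, i < (ofArms l hl).durfee → j < (ofArms l hl).durfee → i ≠ j →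
      (ofArms l hl).parts i ≠ (ofArms l hl).parts j) ↔ ∀ a ∈ l, a + 1 ∉ l := by
  simp only [durfee_ofArms hl]
  constructor
  · intro hdist a ha ha1
    obtain ⟨k, hk, rfl⟩ := l.exists_lt_length_getD_eq ha
    obtain ⟨k', hk', hk'a⟩ := l.exists_lt_length_getD_eq ha1
    have hk'k : k' < k := by
      by_contra! h
      have := hl.getD_add_le h hk'
      omega
    have := hl.getD_add_le hk'k.le hk
    refine hdist k k' hk hk' hk'k.ne' ?_
    rw [parts_ofArms_of_lt hl hk, parts_ofArms_of_lt hl hk']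
    omega
  · intro hgap i j hi hj hij heq
    rw [parts_ofArms_of_lt hl hi, parts_ofArms_of_lt hl hj] at heq
    wlog hlt : i < j generalizing i j
    · exact this j i hj hi hij.symm heq.symm (by omega)
    have := hl.getD_add_le (show i + 1 ≤ j by omega) hj
    have := hl.getD_add_le (show i ≤ i + 1 by omega) (show i + 1 < l.length by omega)
    refine hgap _ (l.getD_mem (show i + 1 < l.length by omega)) ?_
    convert l.getD_mem hi using 1
    omega

theorem isCore_ofArms {T : ℕ} (h : ∀ a ∈ l, a < T ∧ ∀ b ∈ l, a + b + 1 ≠ T) :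
    (ofArms l hl).IsCore T := by
  intro i j hcell hdvd
  have hpos := one_le_hook hcell
  by_cases hsq : i < l.length ∧ j < l.length
  · rw [hook_ofArms_of_lt hl hsq.1 hsq.2] at hdvd hpos
    obtain ⟨hi, hij⟩ := h _ (l.getD_mem hsq.1)
    have := (h _ (l.getD_mem hsq.2)).1
    exact hij _ (l.getD_mem hsq.2) (Nat.eq_of_dvd_of_pos_of_lt_two_mul hdvd hpos (by omega))
  · have hle := hook_ofArms_le_getD_zero hl hcell (by omega)
    have hl0 : 0 < l.length := l.lt_length_of_getD_pos (by omega)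
    have := (h _ (l.getD_mem hl0)).1
    have := Nat.le_of_dvd hpos hdvd
    omega

theorem add_add_one_ne_of_isCore {T : ℕ} (hT : (ofArms l hl).IsCore T) {a b : ℕ} (ha : a ∈ l)
    (hb : b ∈ l) : a + b + 1 ≠ T := by
  obtain ⟨i, hi, rfl⟩ := l.exists_lt_length_getD_eq ha
  obtain ⟨j, hj, rfl⟩ := l.exists_lt_length_getD_eq hb
  intro h
  have hcell : (ofArms l hl).IsCell i j := by
    rw [IsCell, parts_ofArms_of_lt hl hi]
    have := hl.length_le_getD_add hi
    omega
  exact hT i j hcell (by rw [hook_ofArms_of_lt hl hi hj, h])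

theorem lt_of_isCore {t : ℕ} (hgap : ∀ a ∈ l, a + 1 ∉ l) (ht : (ofArms l hl).IsCore t)
    (ht1 : (ofArms l hl).IsCore (t + 1)) {a : ℕ} (ha : a ∈ l) : a < t := by
  obtain ⟨k, hk, rfl⟩ := l.exists_lt_length_getD_eq ha
  have hl0 : 0 < l.length := by omega
  refine (hl.getD_le_getD_zero hk).trans_lt (Nat.lt_of_not_ge fun hle => ?_)
  -- otherwise the first row would contain a hook of length exactly `T`
  have mem_of_isCore {T} (hT : (ofArms l hl).IsCore T) (hT0 : 0 < T) (hTc : T ≤ l.getD 0 0) :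
      l.getD 0 0 - T ∈ l := by
    by_contra hw
    obtain ⟨j, hcell, hhook⟩ := exists_hook_ofArms_eq hl (w := l.getD 0 0 - T) (by omega) hw
    exact hT 0 j hcell (by rw [hhook, Nat.sub_sub_self hTc])
  have ht0 : 0 < t := by
    refine Nat.pos_of_ne_zero fun ht0 => ht1 0 0 ?_ (by rw [ht0]; exact one_dvd _)
    rw [IsCell, parts_ofArms_of_lt hl hl0]
    omega
  have hmem := mem_of_isCore ht ht0 hle
  rcases hle.lt_or_eq with hlt | heq
  · refine hgap _ (mem_of_isCore ht1 (by omega) hlt) ?_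
    convert hmem using 1
    omega
  · exact add_add_one_ne_of_isCore hl ht1 (l.getD_mem hl0) (by simpa [heq] using hmem) (by omega)

theorem inDS_ofArms_iff {t : ℕ} : (ofArms l hl).InDS t ↔
    ∀ a ∈ l, a < t ∧ a + 1 ∉ l ∧ ∀ b ∈ l, a + b + 1 ≠ t ∧ a + b + 1 ≠ t + 1 := by
  rw [InDS, distinct_parts_ofArms_iff hl, and_iff_right (isSelfConjugate_ofArms hl)]
  constructor
  · rintro ⟨ht, ht1, hgap⟩ a ha
    exact ⟨lt_of_isCore hl hgap ht ht1 ha, hgap a ha, fun b hb =>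
      ⟨add_add_one_ne_of_isCore hl ht ha hb, add_add_one_ne_of_isCore hl ht1 ha hb⟩⟩
  · intro h
    refine ⟨isCore_ofArms hl fun a ha => ⟨(h a ha).1, fun b hb => ((h a ha).2.2 b hb).1⟩,
      isCore_ofArms hl fun a ha => ⟨(h a ha).1.trans (Nat.lt_succ_self t), fun b hb =>
        ((h a ha).2.2 b hb).2⟩, fun a ha => (h a ha).2.1⟩

end InDS

end IntegerPartition

def IsDSArmSet (t : ℕ) (S : Finset ℕ) : Prop :=
  ∀ a ∈ S, a < t ∧ a + 1 ∉ S ∧ ∀ b ∈ S, a + b + 1 ≠ t ∧ a + b + 1 ≠ t + 1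

instance (t : ℕ) : DecidablePred (IsDSArmSet t) := fun _ => by
  unfold IsDSArmSet; infer_instance

def dsArmSets (t : ℕ) : Finset (Finset ℕ) := (range t).powerset.filter (IsDSArmSet t)

theorem mem_dsArmSets {t : ℕ} {S : Finset ℕ} : S ∈ dsArmSets t ↔ IsDSArmSet t S := by
  simp only [dsArmSets, mem_filter, mem_powerset, and_iff_right_iff_imp]
  exact fun h a ha => mem_range.2 (h a ha).1

namespace Finset

def reflect (m : ℕ) (S : Finset ℕ) : Finset ℕ := S.image (m - ·)

variable {m x : ℕ} {S : Finset ℕ}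

theorem mem_reflect (hS : ∀ a ∈ S, a ≤ m) : x ∈ S.reflect m ↔ x ≤ m ∧ m - x ∈ S := by
  simp only [reflect, mem_image]
  constructor
  · rintro ⟨a, ha, rfl⟩
    rwa [Nat.sub_sub_self (hS a ha), and_iff_right (Nat.sub_le m a)]
  · rintro ⟨hx, hmx⟩
    exact ⟨m - x, hmx, Nat.sub_sub_self hx⟩

theorem reflect_reflect (hS : ∀ a ∈ S, a ≤ m) : (S.reflect m).reflect m = S := by
  rw [reflect, reflect, image_image]
  exact (image_congr fun a ha => Nat.sub_sub_self (hS a ha)).trans image_id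

theorem card_reflect (hS : ∀ a ∈ S, a ≤ m) : #(S.reflect m) = #S :=
  card_image_of_injOn fun a ha b hb h => by
    have := hS a ha; have := hS b hb; omega

theorem sum_reflect_add_sum (hS : ∀ a ∈ S, a ≤ m) :
    ∑ a ∈ S.reflect m, a + ∑ a ∈ S, a = m * #S := by
  rw [reflect, sum_image fun a ha b hb h => by
    have := hS a ha; have := hS b hb; omega]
  rw [← sum_add_distrib, sum_congr rfl fun a ha => Nat.sub_add_cancel (hS a ha), sum_const,
    smul_eq_mul, mul_comm]

theorem zero_notMem_reflect (hS : ∀ a ∈ S, a < m) : 0 ∉ S.reflect m := by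
  simp only [reflect, mem_image, not_exists, not_and]
  intro a ha
  have := hS a ha
  omega

end Finset

namespace IsDSArmSet

variable {t : ℕ} {S : Finset ℕ}

theorem lt (hS : IsDSArmSet t S) {a : ℕ} (ha : a ∈ S) : a < t := (hS a ha).1

theorem reflect (hS : IsDSArmSet t S) : IsDSArmSet (t + 1) (S.reflect t) := by
  have hle : ∀ a ∈ S, a ≤ t := fun a ha => (hS.lt ha).le
  simp only [IsDSArmSet, mem_reflect hle]
  rintro a ⟨hat, ha⟩
  obtain ⟨-, hgap, hsum⟩ := hS _ ha
  refine ⟨by omega, fun ⟨_, ha'⟩ => ?_, fun b ⟨hbt, hb⟩ => ?_⟩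
  · obtain ⟨-, hgap', -⟩ := hS _ ha'
    exact hgap' (by convert ha using 1; omega)
  · have := hsum _ hb
    omega

theorem reflect_of_zero_notMem (hS : IsDSArmSet (t + 1) S) (h0 : 0 ∉ S) :
    IsDSArmSet t (S.reflect t) := by
  have hpos : ∀ a ∈ S, 0 < a := fun a ha => Nat.pos_of_ne_zero fun h => h0 (h ▸ ha)
  have hle : ∀ a ∈ S, a ≤ t := fun a ha => Nat.lt_succ_iff.1 (hS.lt ha)
  simp only [IsDSArmSet, mem_reflect hle]
  rintro a ⟨hat, ha⟩
  obtain ⟨-, hgap, hsum⟩ := hS _ ha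
  have := hpos _ ha
  refine ⟨by omega, fun ⟨_, ha'⟩ => ?_, fun b ⟨hbt, hb⟩ => ?_⟩
  · obtain ⟨-, hgap', -⟩ := hS _ ha'
    exact hgap' (by convert ha using 1; omega)
  · have := hsum _ hb
    omega

theorem insert_zero_reflect (hS : IsDSArmSet t S) :
    IsDSArmSet (t + 3) (insert 0 (S.reflect (t + 1))) := by
  have hle : ∀ a ∈ S, a ≤ t + 1 := fun a ha => by have := hS.lt ha; omega
  simp only [IsDSArmSet, mem_insert, mem_reflect hle]
  rintro a (rfl | ⟨hat, ha⟩)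
  · refine ⟨by omega, ?_, fun b hb => ?_⟩
    · rintro (h | ⟨-, h⟩)
      · omega
      · exact absurd (hS.lt h) (by omega)
    · rcases hb with rfl | ⟨hbt, -⟩ <;> omega
  obtain ⟨hlt, hgap, hsum⟩ := hS _ ha
  refine ⟨by omega, ?_, fun b hb => ?_⟩
  · rintro (h | ⟨_, ha'⟩)
    · omega
    · obtain ⟨-, hgap', -⟩ := hS _ ha'
      exact hgap' (by convert ha using 1; omega)
  · rcases hb with rfl | ⟨hbt, hb⟩
    · omega
    · have := hsum _ hb
      omega

theorem bounds_of_mem_erase_zero (hS : IsDSArmSet (t + 3) S) (h0 : 0 ∈ S) {a : ℕ}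
    (ha : a ∈ S.erase 0) : 2 ≤ a ∧ a ≤ t + 1 := by
  obtain ⟨ha0, ha⟩ := mem_erase.1 ha
  obtain ⟨-, hgap, hsum⟩ := hS _ h0
  have := hS.lt ha
  have := hsum a ha
  have : a ≠ 1 := fun h => hgap (by simpa [h] using ha)
  omega

theorem reflect_erase_zero (hS : IsDSArmSet (t + 3) S) (h0 : 0 ∈ S) :
    IsDSArmSet t ((S.erase 0).reflect (t + 1)) := by
  have hbound a (ha : a ∈ S.erase 0) := hS.bounds_of_mem_erase_zero h0 ha
  simp only [IsDSArmSet, mem_reflect fun a ha => (hbound a ha).2]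
  rintro a ⟨hat, ha⟩
  have := hbound _ ha
  obtain ⟨-, hgap, hsum⟩ := hS _ (mem_of_mem_erase ha)
  refine ⟨by omega, fun ⟨_, ha'⟩ => ?_, fun b ⟨hbt, hb⟩ => ?_⟩
  · have := hbound _ ha'
    obtain ⟨-, hgap', -⟩ := hS _ (mem_of_mem_erase ha')
    exact hgap' (by convert mem_of_mem_erase ha using 1; omega)
  · have := hbound _ hb
    have := hsum _ (mem_of_mem_erase hb)
    omega

end IsDSArmSet

theorem sum_dsArmSets_add_three {M : Type*} [AddCommMonoid M] (u : ℕ) (w : Finset ℕ → M) :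
    ∑ S ∈ dsArmSets (u + 3), w S = ∑ S ∈ dsArmSets (u + 2), w (S.reflect (u + 2)) +
      ∑ S ∈ dsArmSets u, w (insert 0 (S.reflect (u + 1))) := by
  rw [← sum_filter_not_add_sum_filter (dsArmSets (u + 3)) (0 ∈ ·)]
  congr 1
  · refine sum_nbij' (reflect (u + 2)) (reflect (u + 2)) ?_ ?_ ?_ ?_ ?_ <;>
      intro S hS <;> simp only [mem_filter, mem_dsArmSets] at hS ⊢
    · exact hS.1.reflect_of_zero_notMem hS.2
    · exact ⟨hS.reflect, zero_notMem_reflect fun a ha => hS.lt ha⟩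
    · exact reflect_reflect fun a ha => Nat.le_of_lt_succ (hS.1.lt ha)
    · exact reflect_reflect fun a ha => (hS.lt ha).le
    · rw [reflect_reflect fun a ha => Nat.le_of_lt_succ (hS.1.lt ha)]
  · refine sum_nbij' (fun S => (S.erase 0).reflect (u + 1)) (fun S => insert 0 (S.reflect (u + 1)))
      ?_ ?_ ?_ ?_ ?_ <;> intro S hS <;> simp only [mem_filter, mem_dsArmSets] at hS ⊢
    · exact hS.1.reflect_erase_zero hS.2
    · exact ⟨hS.insert_zero_reflect, mem_insert_self 0 _⟩
    · rw [reflect_reflect fun a ha => (hS.1.bounds_of_mem_erase_zero hS.2 ha).2, insert_erase hS.2]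
    · rw [erase_insert (zero_notMem_reflect fun a ha => by have := hS.lt ha; omega),
        reflect_reflect fun a ha => by have := hS.lt ha; omega]
    · rw [reflect_reflect fun a ha => (hS.1.bounds_of_mem_erase_zero hS.2 ha).2, insert_erase hS.2]

def armSetSize (S : Finset ℕ) : ℕ := 2 * ∑ a ∈ S, a + #S

theorem armSetSize_reflect_add {m : ℕ} {S : Finset ℕ} (hS : ∀ a ∈ S, a ≤ m) :
    armSetSize (S.reflect m) + armSetSize S = 2 * (m + 1) * #S := by
  have := sum_reflect_add_sum hS
  rw [armSetSize, armSetSize, card_reflect hS]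
  linear_combination 2 * this

theorem armSetSize_insert_zero_reflect_add {m : ℕ} {S : Finset ℕ} (hS : ∀ a ∈ S, a < m) :
    armSetSize (insert 0 (S.reflect m)) + armSetSize S = 2 * (m + 1) * #S + 1 := by
  have h0 := zero_notMem_reflect hS
  have := armSetSize_reflect_add fun a ha => (hS a ha).le
  simp only [armSetSize, sum_insert h0, card_insert_of_notMem h0, zero_add] at this ⊢
  linear_combination this

theorem sum_armSetSize_dsArmSets_add_three (u : ℕ) :
    ∑ S ∈ dsArmSets (u + 3), armSetSize S + ∑ S ∈ dsArmSets (u + 2), armSetSize S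
        + ∑ S ∈ dsArmSets u, armSetSize S =
      2 * (u + 3) * ∑ S ∈ dsArmSets (u + 2), #S + (2 * u + 4) * ∑ S ∈ dsArmSets u, #S
        + #(dsArmSets u) := by
  rw [sum_dsArmSets_add_three, add_right_comm _ _ (∑ S ∈ dsArmSets (u + 2), _), ← sum_add_distrib,
    add_assoc, ← sum_add_distrib, add_assoc (2 * (u + 3) * _), mul_sum, mul_sum, card_eq_sum_ones,
    ← sum_add_distrib]
  congr 1
  · refine sum_congr rfl fun S hS => ?_
    exact armSetSize_reflect_add fun a ha => ((mem_dsArmSets.1 hS).lt ha).le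
  · refine sum_congr rfl fun S hS => ?_
    rw [armSetSize_insert_zero_reflect_add fun a ha => by
      have := (mem_dsArmSets.1 hS).lt ha; omega]
    ring

namespace IntegerPartition

noncomputable def ofArmSet (S : Finset ℕ) : IntegerPartition :=
  ofArms (S.sort (· ≥ ·)) S.sortedGT_sort

theorem ofArmSet_injective : Function.Injective ofArmSet := fun S T h => by
  have := congrArg (fun lam => (arms lam).toFinset) h
  simpa only [ofArmSet, arms_ofArms, sort_toFinset] using this

theorem ofArmSet_toFinset_arms {lam : IntegerPartition} (hsc : lam.IsSelfConjugate) :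
    ofArmSet (arms lam).toFinset = lam := by
  have hsort : (arms lam).toFinset.sort (· ≥ ·) = arms lam :=
    (List.toFinset_sort _ (sortedGT_arms lam).nodup).2 (sortedGT_arms lam).sortedGE.pairwise
  simp only [ofArmSet, hsort, ofArms_arms hsc]

theorem inDS_ofArmSet_iff {t : ℕ} {S : Finset ℕ} : (ofArmSet S).InDS t ↔ IsDSArmSet t S := by
  simp only [ofArmSet, inDS_ofArms_iff, mem_sort, IsDSArmSet]

theorem setOf_inDS (t : ℕ) : {lam | lam.InDS t} = ofArmSet '' (dsArmSets t : Set (Finset ℕ)) := by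
  ext lam
  simp only [Set.mem_ofPred_eq, Set.mem_image, mem_coe, mem_dsArmSets]
  constructor
  · intro h
    refine ⟨_, ?_, ofArmSet_toFinset_arms h.1⟩
    rwa [← inDS_ofArmSet_iff, ofArmSet_toFinset_arms h.1]
  · rintro ⟨S, hS, rfl⟩
    exact inDS_ofArmSet_iff.2 hS

theorem finsum_inDS (t : ℕ) (F : IntegerPartition → ℕ) :
    ∑ᶠ (lam : IntegerPartition) (_ : lam.InDS t), F lam = ∑ S ∈ dsArmSets t, F (ofArmSet S) := by
  rw [← finsum_mem_coe_finset, ← finsum_mem_image ofArmSet_injective.injOn, ← setOf_inDS]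
  rfl

end IntegerPartition

open IntegerPartition

theorem hDS_eq_sum (t : ℕ) : hDS t = ∑ S ∈ dsArmSets t, armSetSize S := by
  rw [hDS, finsum_inDS]
  refine sum_congr rfl fun S _ => ?_
  rw [ofArmSet, size_ofArms, armSetSize, length_sort, ← Multiset.sum_coe, sort_eq,
    sum_eq_multiset_sum, Multiset.map_id']

theorem gDS_eq_sum (t : ℕ) : gDS t = ∑ S ∈ dsArmSets t, #S := by
  rw [gDS, finsum_inDS]
  exact sum_congr rfl fun S _ => by rw [ofArmSet, durfee_ofArms, length_sort]

theorem fDS_eq_card (t : ℕ) : fDS t = #(dsArmSets t) := by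
  rw [fDS, ← Set.ncard_coe_finset, ← Set.ncard_image_of_injective _ ofArmSet_injective,
    ← setOf_inDS]
  rfl

theorem hDS_add_three (u : ℕ) :
    hDS (u + 3) + hDS (u + 2) + hDS u =
      2 * (u + 3) * gDS (u + 2) + (2 * u + 4) * gDS u + fDS u := by
  simpa only [hDS_eq_sum, gDS_eq_sum, fDS_eq_card] using sum_armSetSize_dsArmSets_add_three u

/-- `h(0) = h(1) = 0`, `h(2) = 1`, and
`h(t) = 2t·g(t-1) + (2t-2)·g(t-3) - h(t-1) - h(t-3) + f(t-3)` for `t ≥ 3`. -/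
theorem hDS_recurrence :
    hDS 0 = 0 ∧ hDS 1 = 0 ∧ hDS 2 = 1 ∧
      ∀ t : ℕ, 3 ≤ t →
        (hDS t : ℤ) = 2 * t * gDS (t - 1) + (2 * t - 2) * gDS (t - 3)
          - hDS (t - 1) - hDS (t - 3) + fDS (t - 3) := by
  refine ⟨by rw [hDS_eq_sum]; decide, by rw [hDS_eq_sum]; decide, by rw [hDS_eq_sum]; decide,
    fun t ht => ?_⟩
  obtain ⟨u, rfl⟩ := Nat.exists_eq_add_of_le' ht
  have key := congrArg (Nat.cast : ℕ → ℤ) (hDS_add_three u)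
  rw [show u + 3 - 1 = u + 2 by omega, Nat.add_sub_cancel]
  push_cast at key ⊢
  linear_combination key
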